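/- Let k be a field, let n, m ≥ 1, let f₁,…,f_a be elements of the square of the ideal (x₁,…,x_n) in k[[x₁,…,x_n]] and g₁,…,g_b elements of the square of the ideal (y₁,…,y_m) in k[[y₁,…,y_m]], and set R = k[[x₁,…,x_n,y₁,…,y_m]]/(f₁,…,f_a,g₁,…,g_b), where the f_i and g_j are regarded as power series in all the variables. Then mod R has a nontrivial extension-closed subcategory. -/

import Mathlib

universe u

open IsLocalRing

/-- A membership predicate for a strict full subcategory of the category of `R`-modules. -/
def ModulePred (R : Type u) [CommRing R] : Type (u + 1) :=
  ∀ (M : Type u) [AddCommGroup M] [Module R M], Prop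

/-- `P` is an extension-closed subcategory of `mod R`: a nonempty strict full subcategory of
the category of finitely generated `R`-modules that is closed under direct summands and
extensions. -/
def IsExtClosedSubcat (R : Type u) [CommRing R] (P : ModulePred R) : Prop :=
  (∀ (M : Type u) [AddCommGroup M] [Module R M], P M → Module.Finite R M)
  ∧ (∀ (M N : Type u) [AddCommGroup M] [Module R M] [AddCommGroup N] [Module R N],
      Nonempty (M ≃ₗ[R] N) → P M → P N)
  ∧ (∃ (M : Type u) (_ : AddCommGroup M) (_ : Module R M), P M)
  ∧ (∀ (M N : Type u) [AddCommGroup M] [Module R M] [AddCommGroup N] [Module R N],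
      P M → (∃ (ι : N →ₗ[R] M) (π : M →ₗ[R] N), π ∘ₗ ι = LinearMap.id) → P N)
  ∧ (∀ (L M N : Type u) [AddCommGroup L] [Module R L] [AddCommGroup M] [Module R M]
      [AddCommGroup N] [Module R N] (f : L →ₗ[R] M) (g : M →ₗ[R] N),
      Function.Injective f → Function.Surjective g → Function.Exact f g →
      P L → P N → P M)

/-- `P` is the zero subcategory of `mod R`. -/
def IsZeroSubcat (R : Type u) [CommRing R] (P : ModulePred R) : Prop :=
  ∀ (M : Type u) [AddCommGroup M] [Module R M], Module.Finite R M → (P M ↔ Subsingleton M)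

/-- `P` is `add R`, the subcategory of finitely generated free `R`-modules. -/
def IsAddRSubcat (R : Type u) [CommRing R] (P : ModulePred R) : Prop :=
  ∀ (M : Type u) [AddCommGroup M] [Module R M], Module.Finite R M → (P M ↔ Module.Free R M)

/-- `P` is all of `mod R`. -/
def IsModRSubcat (R : Type u) [CommRing R] (P : ModulePred R) : Prop :=
  ∀ (M : Type u) [AddCommGroup M] [Module R M], Module.Finite R M → P M

/-- `mod R` has only trivial extension-closed subcategories. -/
def HasOnlyTrivialExtClosedSubcats (R : Type u) [CommRing R] : Prop :=
  ∀ P : ModulePred R, IsExtClosedSubcat R P →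
    IsZeroSubcat R P ∨ IsAddRSubcat R P ∨ IsModRSubcat R P

/-- `mod R` has a nontrivial extension-closed subcategory. -/
def HasNontrivialExtClosedSubcat (R : Type u) [CommRing R] : Prop :=
  ∃ P : ModulePred R, IsExtClosedSubcat R P ∧
    ¬ IsZeroSubcat R P ∧ ¬ IsAddRSubcat R P ∧ ¬ IsModRSubcat R P

/-- `R` is an Artinian hypersurface: `R ≅ S/(xⁿ)` for a discrete valuation ring `S`
with maximal ideal `(x)` and a positive integer `n`. -/
def IsArtinianHypersurface (R : Type u) [CommRing R] : Prop :=
  ∃ (S : Type u) (_ : CommRing S) (_ : IsDomain S) (_ : IsDiscreteValuationRing S)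
    (x : S) (n : ℕ),
    IsLocalRing.maximalIdeal S = Ideal.span {x} ∧ 0 < n ∧
    Nonempty (R ≃+* S ⧸ Ideal.span {x ^ n})

section AuxGeneral

variable {R : Type u} [CommRing R]

theorem aux_finite_of_exact {L M N : Type u} [AddCommGroup L] [Module R L] [AddCommGroup M]
    [Module R M] [AddCommGroup N] [Module R N] (f : L →ₗ[R] M) (g : M →ₗ[R] N)
    (hg : Function.Surjective g) (hex : Function.Exact f g)
    (hL : Module.Finite R L) (hN : Module.Finite R N) : Module.Finite R M := by
  classical
  obtain ⟨sL, hsL⟩ := hL.fg_top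
  obtain ⟨sN, hsN⟩ := hN.fg_top
  choose lift hlift using hg
  refine ⟨⟨sL.image f ∪ sN.image lift, ?_⟩⟩
  rw [eq_top_iff]
  intro x _
  have hx : g x ∈ Submodule.map g (Submodule.span R (lift '' sN)) := by
    rw [Submodule.map_span]
    have himg : g '' (lift '' (sN : Set N)) = (sN : Set N) := by
      ext y; constructor
      · rintro ⟨-, ⟨z, hz, rfl⟩, rfl⟩; rw [hlift]; exact hz
      · intro hy; exact ⟨lift y, ⟨y, hy, rfl⟩, hlift y⟩
    rw [himg, hsN]; trivial
  obtain ⟨x', hx', hgx'⟩ := hx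
  have hxr : x - x' ∈ Set.range f := by
    rw [← hex (x - x')]
    rw [map_sub, hgx', sub_self]
  obtain ⟨l, hl⟩ := hxr
  have hx'mem : x' ∈ Submodule.span R ((sL.image f ∪ sN.image lift : Finset M) : Set M) := by
    refine Submodule.span_mono ?_ hx'
    intro z hz
    rw [Finset.coe_union, Finset.coe_image, Finset.coe_image]
    exact Or.inr hz
  have hfl : f l ∈ Submodule.span R ((sL.image f ∪ sN.image lift : Finset M) : Set M) := by
    have h1 : f l ∈ Submodule.map f (Submodule.span R (sL : Set L)) := by
      rw [hsL]; exact ⟨l, trivial, rfl⟩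
    rw [Submodule.map_span] at h1
    refine Submodule.span_mono ?_ h1
    intro z hz
    rw [Finset.coe_union, Finset.coe_image, Finset.coe_image]
    exact Or.inl hz
  have : x = x' + f l := by rw [hl]; abel
  rw [this]
  exact add_mem hx'mem hfl

theorem aux_smul_top_map {M N : Type u} [AddCommGroup M] [Module R M] [AddCommGroup N]
    [Module R N] (φ : M →ₗ[R] N) (I : Ideal R) {x : M}
    (hx : x ∈ I • (⊤ : Submodule R M)) : φ x ∈ I • (⊤ : Submodule R N) := by
  have h := Submodule.mem_map_of_mem (f := φ) hx
  rw [Submodule.map_smul''] at h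
  exact Submodule.smul_mono le_rfl le_top h

theorem aux_smul_top_killed {M : Type u} [AddCommGroup M] [Module R M] {I I' : Ideal R}
    (hII' : ∀ i ∈ I, ∀ i' ∈ I', i * i' = 0) {y : M}
    (hy : y ∈ I' • (⊤ : Submodule R M)) : ∀ i ∈ I, i • y = 0 := by
  refine Submodule.smul_induction_on hy ?_ ?_
  · intro r hr u _ i hi
    rw [smul_smul, hII' i hi r hr, zero_smul]
  · intro y z hy hz i hi
    rw [smul_add, hy i hi, hz i hi, add_zero]

def annPred (I I' : Ideal R) : ModulePred R := fun M _ _ =>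
  Module.Finite R M ∧ ∀ x : M, (∀ i ∈ I, i • x = 0) → x ∈ I' • (⊤ : Submodule R M)

theorem annPred_extClosed (I I' : Ideal R) (hII' : ∀ i ∈ I, ∀ i' ∈ I', i * i' = 0) :
    IsExtClosedSubcat R (annPred I I') := by
  refine ⟨fun M _ _ h => h.1, ?_, ?_, ?_, ?_⟩
  · rintro M N _ _ _ _ ⟨e⟩ ⟨hfin, h⟩
    refine ⟨Module.Finite.equiv e, fun x hx => ?_⟩
    have hmem := h (e.symm x) (fun i hi => by
      rw [← map_smul, hx i hi, map_zero])
    have := aux_smul_top_map (e : M →ₗ[R] N) I' hmem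
    simpa using this
  · refine ⟨PUnit, inferInstance, inferInstance, ?_, fun x _ => ?_⟩
    · exact Module.Finite.of_surjective (0 : R →ₗ[R] PUnit.{u+1}) (fun y => ⟨0, Subsingleton.elim _ _⟩)
    · have : x = 0 := Subsingleton.elim x 0
      rw [this]; exact zero_mem _
  · rintro M N _ _ _ _ ⟨hfin, h⟩ ⟨ι, π, hπι⟩
    have hsurj : Function.Surjective π := fun y => ⟨ι y, by
      have := LinearMap.congr_fun hπι y; simpa using this⟩
    refine ⟨Module.Finite.of_surjective π hsurj, fun x hx => ?_⟩
    have h2 := h (ι x) (fun i hi => by rw [← map_smul, hx i hi, map_zero])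
    have h3 := aux_smul_top_map π I' h2
    have h4 := LinearMap.congr_fun hπι x
    simp only [LinearMap.coe_comp, Function.comp_apply, LinearMap.id_coe, id_eq] at h4
    rwa [h4] at h3
  · rintro L M N _ _ _ _ _ _ f g hf hg hex ⟨hfinL, hL⟩ ⟨hfinN, hN⟩
    refine ⟨aux_finite_of_exact f g hg hex hfinL hfinN, fun x hx => ?_⟩
    have hgx := hN (g x) (fun i hi => by rw [← map_smul, hx i hi, map_zero])
    have claimA : ∀ z ∈ I' • (⊤ : Submodule R N), ∃ x' ∈ I' • (⊤ : Submodule R M), g x' = z := by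
      intro z hz
      refine Submodule.smul_induction_on hz ?_ ?_
      · intro r hr u _
        obtain ⟨y, hy⟩ := hg u
        exact ⟨r • y, Submodule.smul_mem_smul hr trivial, by rw [map_smul, hy]⟩
      · rintro z₁ z₂ ⟨x₁, hx₁, hgx₁⟩ ⟨x₂, hx₂, hgx₂⟩
        exact ⟨x₁ + x₂, add_mem hx₁ hx₂, by rw [map_add, hgx₁, hgx₂]⟩
    obtain ⟨x', hx'mem, hgx'⟩ := claimA _ hgx
    have hsub : x - x' ∈ Set.range f := by
      rw [← hex (x - x')]
      rw [map_sub, hgx', sub_self]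
    obtain ⟨l, hl⟩ := hsub
    have hlk : ∀ i ∈ I, i • l = 0 := by
      intro i hi
      apply hf
      rw [map_smul, hl, map_zero, smul_sub, hx i hi,
        aux_smul_top_killed hII' hx'mem i hi, sub_zero]
    have hfl := aux_smul_top_map f I' (hL l hlk)
    have : x = x' + f l := by rw [hl]; abel
    rw [this]
    exact add_mem hx'mem hfl

def powPred (R : Type u) [CommRing R] [IsLocalRing R] : ModulePred R := fun M _ _ =>
  Module.Finite R M ∧ ∃ N : ℕ, ∀ c ∈ (maximalIdeal R) ^ N, ∀ x : M, c • x = 0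

theorem powPred_extClosed [IsLocalRing R] : IsExtClosedSubcat R (powPred R) := by
  refine ⟨fun M _ _ h => h.1, ?_, ?_, ?_, ?_⟩
  · rintro M N _ _ _ _ ⟨e⟩ ⟨hfin, Nn, h⟩
    refine ⟨Module.Finite.equiv e, Nn, fun c hc x => ?_⟩
    have := congrArg e (h c hc (e.symm x))
    rwa [map_smul, LinearEquiv.apply_symm_apply, map_zero] at this
  · refine ⟨PUnit, inferInstance, inferInstance, ?_, 0, fun c _ x => Subsingleton.elim _ _⟩
    exact Module.Finite.of_surjective (0 : R →ₗ[R] PUnit.{u+1}) (fun y => ⟨0, Subsingleton.elim _ _⟩)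
  · rintro M N _ _ _ _ ⟨hfin, Nn, h⟩ ⟨ι, π, hπι⟩
    have hsurj : Function.Surjective π := fun y => ⟨ι y, by
      have := LinearMap.congr_fun hπι y; simpa using this⟩
    refine ⟨Module.Finite.of_surjective π hsurj, Nn, fun c hc x => ?_⟩
    have h4 := LinearMap.congr_fun hπι x
    simp only [LinearMap.coe_comp, Function.comp_apply, LinearMap.id_coe, id_eq] at h4
    rw [← h4, ← map_smul, h c hc, map_zero]
  · rintro L M N _ _ _ _ _ _ f g hf hg hex ⟨hfinL, Na, hL⟩ ⟨hfinN, Nb, hN⟩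
    refine ⟨aux_finite_of_exact f g hg hex hfinL hfinN, Na + Nb, fun c hc => ?_⟩
    rw [pow_add] at hc
    refine Submodule.mul_induction_on hc ?_ ?_
    · intro r hr s hs x
      have h1 : g (s • x) = 0 := by rw [map_smul, hN s hs (g x)]
      obtain ⟨l, hl⟩ := (hex (s • x)).mp h1
      rw [mul_smul, ← hl, ← map_smul, hL r hr, map_zero]
    · intro c₁ c₂ h₁ h₂ x
      rw [add_smul, h₁ x, h₂ x, add_zero]

theorem aux_not_free {M : Type u} [AddCommGroup M] [Module R M] [Nontrivial M] {r : R}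
    (hr : r ≠ 0) (h : ∀ x : M, r • x = 0) : ¬Module.Free R M := by
  intro hfree
  let b := Module.Free.chooseBasis R M
  obtain ⟨i⟩ := b.index_nonempty
  have h0 := congrArg (fun v => b.repr v i) (h (b i))
  simp only [map_smul, Module.Basis.repr_self, map_zero, Finsupp.coe_zero, Pi.zero_apply,
    Finsupp.smul_single, smul_eq_mul, mul_one, Finsupp.single_eq_same] at h0
  exact hr h0

end AuxGeneral



open MvPowerSeries

section AuxPS

theorem aux_pair_single {σ : Type*} {v : σ} {p q : σ →₀ ℕ}
    (h : p + q = Finsupp.single v 1) :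
    (p = 0 ∧ q = Finsupp.single v 1) ∨ (p = Finsupp.single v 1 ∧ q = 0) := by
  classical
  have happ : ∀ w, p w + q w = (Finsupp.single v 1 : σ →₀ ℕ) w := by
    intro w; rw [← h, Finsupp.add_apply]
  have hv := happ v
  rw [Finsupp.single_eq_same] at hv
  rcases Nat.eq_zero_or_pos (p v) with hp | hp
  · left
    have hp0 : p = 0 := by
      ext w
      simp only [Finsupp.coe_zero, Pi.zero_apply]
      by_cases hw : w = v
      · subst hw; exact hp
      · have h2 := happ w
        rw [Finsupp.single_eq_of_ne' (fun hvw => hw hvw.symm)] at h2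
        omega
    exact ⟨hp0, by rw [hp0, zero_add] at h; exact h⟩
  · right
    have hq0 : q = 0 := by
      ext w
      simp only [Finsupp.coe_zero, Pi.zero_apply]
      by_cases hw : w = v
      · subst hw; omega
      · have h2 := happ w
        rw [Finsupp.single_eq_of_ne' (fun hvw => hw hvw.symm)] at h2
        omega
    exact ⟨by rw [hq0, add_zero] at h; exact h, hq0⟩

variable {k : Type u} [Field k]

theorem aux_coeff_single_mulr {σ : Type*} (v : σ) (a b : MvPowerSeries σ k)
    (hb0 : MvPowerSeries.coeff 0 b = 0)
    (hbv : MvPowerSeries.coeff (Finsupp.single v 1) b = 0) :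
    MvPowerSeries.coeff (Finsupp.single v 1) (a * b) = 0 := by
  classical
  rw [MvPowerSeries.coeff_mul]
  refine Finset.sum_eq_zero ?_
  rintro ⟨p, q⟩ hpq
  rw [Finset.HasAntidiagonal.mem_antidiagonal] at hpq
  rcases aux_pair_single hpq with ⟨hp, hq⟩ | ⟨hp, hq⟩
  · rw [hq, hbv, mul_zero]
  · rw [hq, hb0, mul_zero]

theorem aux_coeff_single_mull {σ : Type*} (v : σ) (a b : MvPowerSeries σ k)
    (ha0 : MvPowerSeries.coeff 0 a = 0)
    (hb0 : MvPowerSeries.coeff 0 b = 0) :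
    MvPowerSeries.coeff (Finsupp.single v 1) (a * b) = 0 := by
  classical
  rw [MvPowerSeries.coeff_mul]
  refine Finset.sum_eq_zero ?_
  rintro ⟨p, q⟩ hpq
  rw [Finset.HasAntidiagonal.mem_antidiagonal] at hpq
  rcases aux_pair_single hpq with ⟨hp, hq⟩ | ⟨hp, hq⟩
  · rw [hp, ha0, zero_mul]
  · rw [hq, hb0, mul_zero]

end AuxPS

section PureX

variable {k : Type u} [Field k] {n m : ℕ}

/-- The "pure x-part" projection of a power series in variables `Fin n ⊕ Fin m`. -/
def pureX (k : Type u) [Field k] (n m : ℕ)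
    (φ : MvPowerSeries (Fin n ⊕ Fin m) k) : MvPowerSeries (Fin n ⊕ Fin m) k :=
  fun d => if ∀ j : Fin m, d (Sum.inr j) = 0 then MvPowerSeries.coeff d φ else 0

theorem coeff_pureX (φ : MvPowerSeries (Fin n ⊕ Fin m) k) (d : Fin n ⊕ Fin m →₀ ℕ) :
    MvPowerSeries.coeff d (pureX k n m φ) =
      if ∀ j : Fin m, d (Sum.inr j) = 0 then MvPowerSeries.coeff d φ else 0 := rfl

/-- Kill the variables `Sum.inr j` for `j ∈ s`. -/
def killV (k : Type u) [Field k] (n m : ℕ) (s : Finset (Fin m))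
    (φ : MvPowerSeries (Fin n ⊕ Fin m) k) : MvPowerSeries (Fin n ⊕ Fin m) k :=
  fun d => if ∀ j ∈ s, d (Sum.inr j) = 0 then MvPowerSeries.coeff d φ else 0

theorem coeff_killV (s : Finset (Fin m)) (φ : MvPowerSeries (Fin n ⊕ Fin m) k)
    (d : Fin n ⊕ Fin m →₀ ℕ) :
    MvPowerSeries.coeff d (killV k n m s φ) =
      if ∀ j ∈ s, d (Sum.inr j) = 0 then MvPowerSeries.coeff d φ else 0 := rfl

theorem killV_empty (φ : MvPowerSeries (Fin n ⊕ Fin m) k) : killV k n m ∅ φ = φ := by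
  apply MvPowerSeries.ext; intro d
  rw [coeff_killV]
  simp

theorem killV_insert (j : Fin m) (s : Finset (Fin m)) (φ : MvPowerSeries (Fin n ⊕ Fin m) k) :
    killV k n m (insert j s) φ = killV k n m {j} (killV k n m s φ) := by
  apply MvPowerSeries.ext; intro d
  rw [coeff_killV, coeff_killV, coeff_killV]
  by_cases h1 : d (Sum.inr j) = 0 <;> by_cases h2 : ∀ j' ∈ s, d (Sum.inr j') = 0 <;>
    simp [Finset.mem_insert, h1, h2] <;> tauto

theorem sub_killV_single_mem (j : Fin m) (ψ : MvPowerSeries (Fin n ⊕ Fin m) k) :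
    ψ - killV k n m {j} ψ ∈
      Ideal.span {(MvPowerSeries.X (Sum.inr j) : MvPowerSeries (Fin n ⊕ Fin m) k)} := by
  classical
  set χ := ψ - killV k n m {j} ψ with hχdef
  have hχ : ∀ d, MvPowerSeries.coeff d χ =
      if d (Sum.inr j) = 0 then 0 else MvPowerSeries.coeff d ψ := by
    intro d
    rw [hχdef, map_sub, coeff_killV]
    by_cases hd : d (Sum.inr j) = 0 <;> simp [hd]
  refine Ideal.mem_span_singleton.mpr
    ⟨fun e => MvPowerSeries.coeff (e + Finsupp.single (Sum.inr j) 1) χ, ?_⟩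
  apply MvPowerSeries.ext; intro d
  have hX : (MvPowerSeries.X (Sum.inr j) : MvPowerSeries (Fin n ⊕ Fin m) k) =
      MvPowerSeries.monomial (Finsupp.single (Sum.inr j) 1) 1 := rfl
  erw [hX, MvPowerSeries.coeff_monomial_mul]
  by_cases hd : d (Sum.inr j) = 0
  · rw [if_neg, hχ, if_pos hd]
    rw [Finsupp.single_le_iff]
    omega
  · have hle : Finsupp.single (Sum.inr j) 1 ≤ d := by
      rw [Finsupp.single_le_iff]; omega
    rw [if_pos hle, one_mul, hχ, if_neg hd]
    have heq : d - Finsupp.single (Sum.inr j) 1 + Finsupp.single (Sum.inr j) 1 = d :=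
      tsub_add_cancel_of_le hle
    rw [MvPowerSeries.coeff_apply]
    change _ = MvPowerSeries.coeff (d - Finsupp.single (Sum.inr j) 1 + Finsupp.single (Sum.inr j) 1) χ
    rw [heq, hχ, if_neg hd]
    rfl

theorem sub_killV_mem (s : Finset (Fin m)) (φ : MvPowerSeries (Fin n ⊕ Fin m) k) :
    φ - killV k n m s φ ∈ Ideal.span
      (Set.range fun j : Fin m => (MvPowerSeries.X (Sum.inr j) :
        MvPowerSeries (Fin n ⊕ Fin m) k)) := by
  classical
  induction s using Finset.induction_on with
  | empty => rw [killV_empty]; simp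
  | @insert j s hj ih =>
    rw [killV_insert]
    have h2 := sub_killV_single_mem (n := n) j (killV k n m s φ)
    have hre : φ - killV k n m {j} (killV k n m s φ) =
        (φ - killV k n m s φ) + (killV k n m s φ - killV k n m {j} (killV k n m s φ)) := by
      ring
    rw [hre]
    refine Ideal.add_mem _ ih (Ideal.span_mono ?_ h2)
    exact Set.singleton_subset_iff.mpr ⟨j, rfl⟩

theorem pureX_eq_killV_univ (φ : MvPowerSeries (Fin n ⊕ Fin m) k) :
    pureX k n m φ = killV k n m Finset.univ φ := by
  apply MvPowerSeries.ext; intro d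
  rw [coeff_pureX, coeff_killV]
  simp

theorem sub_pureX_mem (φ : MvPowerSeries (Fin n ⊕ Fin m) k) :
    φ - pureX k n m φ ∈ Ideal.span
      (Set.range fun j : Fin m => (MvPowerSeries.X (Sum.inr j) :
        MvPowerSeries (Fin n ⊕ Fin m) k)) := by
  rw [pureX_eq_killV_univ]
  exact sub_killV_mem _ _

theorem pureX_one : pureX k n m (1 : MvPowerSeries (Fin n ⊕ Fin m) k) = 1 := by
  classical
  apply MvPowerSeries.ext; intro d
  rw [coeff_pureX]
  by_cases hd : ∀ j : Fin m, d (Sum.inr j) = 0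
  · rw [if_pos hd]
  · rw [if_neg hd, MvPowerSeries.coeff_one, if_neg]
    intro h0
    exact hd (fun j => by rw [h0]; rfl)

theorem pureX_add (φ ψ : MvPowerSeries (Fin n ⊕ Fin m) k) :
    pureX k n m (φ + ψ) = pureX k n m φ + pureX k n m ψ := by
  classical
  apply MvPowerSeries.ext; intro d
  rw [map_add, coeff_pureX, coeff_pureX, coeff_pureX, map_add]
  by_cases hd : ∀ j : Fin m, d (Sum.inr j) = 0
  · rw [if_pos hd, if_pos hd, if_pos hd]
  · rw [if_neg hd, if_neg hd, if_neg hd, add_zero]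

theorem pureX_mul (φ ψ : MvPowerSeries (Fin n ⊕ Fin m) k) :
    pureX k n m (φ * ψ) = pureX k n m φ * pureX k n m ψ := by
  classical
  apply MvPowerSeries.ext; intro d
  rw [coeff_pureX, MvPowerSeries.coeff_mul, MvPowerSeries.coeff_mul]
  by_cases hd : ∀ j : Fin m, d (Sum.inr j) = 0
  · rw [if_pos hd]
    refine Finset.sum_congr rfl ?_
    rintro ⟨p, q⟩ hpq
    rw [Finset.HasAntidiagonal.mem_antidiagonal] at hpq
    have hsum : ∀ j : Fin m, p (Sum.inr j) + q (Sum.inr j) = 0 := by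
      intro j
      have h3 : (p + q) (Sum.inr j) = d (Sum.inr j) := by rw [hpq]
      rw [Finsupp.add_apply] at h3
      rw [h3]; exact hd j
    rw [coeff_pureX, coeff_pureX,
      if_pos (fun j => Nat.eq_zero_of_add_eq_zero_right (hsum j)),
      if_pos (fun j => Nat.eq_zero_of_add_eq_zero_left (hsum j))]
  · rw [if_neg hd]
    push_neg at hd
    obtain ⟨j₀, hj₀⟩ := hd
    refine (Finset.sum_eq_zero ?_).symm
    rintro ⟨p, q⟩ hpq
    rw [Finset.HasAntidiagonal.mem_antidiagonal] at hpq
    have h3 : p (Sum.inr j₀) + q (Sum.inr j₀) = d (Sum.inr j₀) := by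
      rw [← Finsupp.add_apply, hpq]
    by_cases hp : p (Sum.inr j₀) = 0
    · have hq : q (Sum.inr j₀) ≠ 0 := by omega
      rw [coeff_pureX (φ := ψ), if_neg (fun hall => hq (hall j₀)), mul_zero]
    · rw [coeff_pureX (φ := φ), if_neg (fun hall => hp (hall j₀)), zero_mul]

/-- `pureX` as a ring homomorphism. -/
def pureXHom (k : Type u) [Field k] (n m : ℕ) :
    MvPowerSeries (Fin n ⊕ Fin m) k →+* MvPowerSeries (Fin n ⊕ Fin m) k where
  toFun := pureX k n m
  map_one' := pureX_one
  map_mul' := pureX_mul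
  map_zero' := by
    apply MvPowerSeries.ext; intro d
    rw [coeff_pureX]
    simp
  map_add' := pureX_add

theorem pureXHom_apply (φ : MvPowerSeries (Fin n ⊕ Fin m) k) :
    pureXHom k n m φ = pureX k n m φ := rfl

theorem pureX_eq_self (φ : MvPowerSeries (Fin n ⊕ Fin m) k)
    (h : ∀ d : Fin n ⊕ Fin m →₀ ℕ, (∃ j : Fin m, d (Sum.inr j) ≠ 0) →
      MvPowerSeries.coeff d φ = 0) : pureX k n m φ = φ := by
  apply MvPowerSeries.ext; intro d
  rw [coeff_pureX]
  by_cases hd : ∀ j : Fin m, d (Sum.inr j) = 0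
  · rw [if_pos hd]
  · rw [if_neg hd]
    push_neg at hd
    exact (h d hd).symm

theorem pureX_eq_zero (φ : MvPowerSeries (Fin n ⊕ Fin m) k)
    (h : ∀ d : Fin n ⊕ Fin m →₀ ℕ, (∃ i : Fin n, d (Sum.inl i) ≠ 0) →
      MvPowerSeries.coeff d φ = 0)
    (h0 : MvPowerSeries.coeff 0 φ = 0) : pureX k n m φ = 0 := by
  apply MvPowerSeries.ext; intro d
  rw [coeff_pureX, map_zero]
  by_cases hd : ∀ j : Fin m, d (Sum.inr j) = 0
  · rw [if_pos hd]
    by_cases hd0 : d = 0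
    · rw [hd0]; exact h0
    · refine h d ?_
      by_contra hno
      push_neg at hno
      apply hd0
      ext s
      rcases s with i | j
      · exact hno i
      · exact hd j
  · rw [if_neg hd]

theorem pureX_X_inr (j : Fin m) :
    pureX k n m (MvPowerSeries.X (Sum.inr j) : MvPowerSeries (Fin n ⊕ Fin m) k) = 0 := by
  classical
  apply MvPowerSeries.ext; intro d
  rw [coeff_pureX, map_zero]
  by_cases hd : ∀ j' : Fin m, d (Sum.inr j') = 0
  · rw [if_pos hd, MvPowerSeries.coeff_X, if_neg]
    intro h0
    have := hd j
    rw [h0, Finsupp.single_eq_same] at this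
    exact one_ne_zero this
  · rw [if_neg hd]

end PureX

section P3
variable {k : Type u} [Field k] {n m : ℕ}

open MvPowerSeries

theorem aux_span_vars_le_ker (S : Set (Fin n ⊕ Fin m)) :
    Ideal.span ((fun s => (MvPowerSeries.X s : MvPowerSeries (Fin n ⊕ Fin m) k)) '' S) ≤
      RingHom.ker (MvPowerSeries.constantCoeff (σ := Fin n ⊕ Fin m) (R := k)) := by
  rw [Ideal.span_le]
  rintro φ ⟨s, hs, rfl⟩
  simp only [SetLike.mem_coe, RingHom.mem_ker, MvPowerSeries.constantCoeff_X]

theorem aux_coeffv_of_mem_mul {φ : MvPowerSeries (Fin n ⊕ Fin m) k}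
    (hφ : φ ∈ RingHom.ker (MvPowerSeries.constantCoeff (σ := Fin n ⊕ Fin m) (R := k)) *
      RingHom.ker (MvPowerSeries.constantCoeff (σ := Fin n ⊕ Fin m) (R := k))) :
    ∀ v, MvPowerSeries.coeff (Finsupp.single v 1) φ = 0 := by
  refine Submodule.mul_induction_on hφ ?_ ?_
  · intro x hx y hy v
    refine aux_coeff_single_mull (k := k) (σ := Fin n ⊕ Fin m) v x y ?_ ?_
    · simpa [MvPowerSeries.coeff_zero_eq_constantCoeff] using RingHom.mem_ker.mp hx
    · simpa [MvPowerSeries.coeff_zero_eq_constantCoeff] using RingHom.mem_ker.mp hy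
  · intro x y hx hy v
    rw [map_add, hx v, hy v, add_zero]

theorem aux_coeff0_of_mem_mul {φ : MvPowerSeries (Fin n ⊕ Fin m) k}
    (hφ : φ ∈ RingHom.ker (MvPowerSeries.constantCoeff (σ := Fin n ⊕ Fin m) (R := k)) *
      RingHom.ker (MvPowerSeries.constantCoeff (σ := Fin n ⊕ Fin m) (R := k))) :
    MvPowerSeries.coeff 0 φ = 0 := by
  have := Ideal.mul_le_right (I := RingHom.ker (MvPowerSeries.constantCoeff (σ := Fin n ⊕ Fin m) (R := k))) hφ
  simpa [MvPowerSeries.coeff_zero_eq_constantCoeff] using RingHom.mem_ker.mp this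

end P3

section P4
variable {k : Type u} [Field k] {n m : ℕ} {a b : ℕ}
variable (f : Fin a → MvPowerSeries (Fin n ⊕ Fin m) k)
variable (g : Fin b → MvPowerSeries (Fin n ⊕ Fin m) k)

open MvPowerSeries

theorem aux_F_le
    (hfx : ∀ i, f i ∈
      (Ideal.span (Set.range fun j : Fin n => MvPowerSeries.X (Sum.inl j)) :
        Ideal (MvPowerSeries (Fin n ⊕ Fin m) k)) ^ 2)
    (hgy : ∀ i, g i ∈
      (Ideal.span (Set.range fun j : Fin m => MvPowerSeries.X (Sum.inr j)) :
        Ideal (MvPowerSeries (Fin n ⊕ Fin m) k)) ^ 2) :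
    Ideal.span (Set.range f ∪ Set.range g) ≤
      RingHom.ker (constantCoeff (σ := Fin n ⊕ Fin m) (R := k)) *
        RingHom.ker (constantCoeff (σ := Fin n ⊕ Fin m) (R := k)) := by
  have h1 : (Ideal.span (Set.range fun j : Fin n => MvPowerSeries.X (Sum.inl j)) :
      Ideal (MvPowerSeries (Fin n ⊕ Fin m) k)) ≤
      RingHom.ker (constantCoeff (σ := Fin n ⊕ Fin m) (R := k)) := by
    rw [Ideal.span_le]
    rintro φ ⟨j, rfl⟩
    simp [RingHom.mem_ker]
  have h2 : (Ideal.span (Set.range fun j : Fin m => MvPowerSeries.X (Sum.inr j)) :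
      Ideal (MvPowerSeries (Fin n ⊕ Fin m) k)) ≤
      RingHom.ker (constantCoeff (σ := Fin n ⊕ Fin m) (R := k)) := by
    rw [Ideal.span_le]
    rintro φ ⟨j, rfl⟩
    simp [RingHom.mem_ker]
  rw [Ideal.span_le]
  rintro φ (⟨i, rfl⟩ | ⟨i, rfl⟩)
  · have := hfx i
    rw [pow_two] at this
    exact Ideal.mul_mono h1 h1 this
  · have := hgy i
    rw [pow_two] at this
    exact Ideal.mul_mono h2 h2 this

theorem aux_coeff_Jy :
    ∀ φ ∈ (Ideal.span (Set.range fun j : Fin m => MvPowerSeries.X (Sum.inr j)) :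
        Ideal (MvPowerSeries (Fin n ⊕ Fin m) k)),
      constantCoeff (σ := Fin n ⊕ Fin m) (R := k) φ = 0 ∧
      ∀ i : Fin n, MvPowerSeries.coeff (Finsupp.single (Sum.inl i) 1) φ = 0 := by
  intro φ hφ
  refine Submodule.span_induction
    (p := fun x _ => constantCoeff (σ := Fin n ⊕ Fin m) (R := k) x = 0 ∧
      ∀ i : Fin n, MvPowerSeries.coeff (Finsupp.single (Sum.inl i) 1) x = 0)
    ?_ ?_ ?_ ?_ hφ
  · rintro x ⟨j, rfl⟩
    refine ⟨by simp, fun i => ?_⟩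
    classical
    rw [MvPowerSeries.coeff_X, if_neg]
    intro hsing
    have := (Finsupp.single_left_inj (one_ne_zero (α := ℕ))).mp hsing
    exact Sum.inl_ne_inr this
  · simp
  · intro x y _ _ hx hy
    exact ⟨by rw [map_add, hx.1, hy.1, add_zero],
      fun i => by rw [map_add, hx.2 i, hy.2 i, add_zero]⟩
  · intro c x _ hx
    rw [smul_eq_mul]
    refine ⟨by rw [map_mul, hx.1, mul_zero], fun i => ?_⟩
    refine aux_coeff_single_mulr _ c x ?_ (hx.2 i)
    rw [MvPowerSeries.coeff_zero_eq_constantCoeff, hx.1]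

theorem aux_PiF
    (hfonlyx : ∀ i (d : Fin n ⊕ Fin m →₀ ℕ),
      (∃ j : Fin m, d (Sum.inr j) ≠ 0) → MvPowerSeries.coeff d (f i) = 0)
    (hgonlyy : ∀ i (d : Fin n ⊕ Fin m →₀ ℕ),
      (∃ j : Fin n, d (Sum.inl j) ≠ 0) → MvPowerSeries.coeff d (g i) = 0)
    (hg0 : ∀ i, MvPowerSeries.coeff 0 (g i) = 0) :
    ∀ φ ∈ Ideal.span (Set.range f ∪ Set.range g),
      pureXHom k n m φ ∈ Ideal.span (Set.range f ∪ Set.range g) := by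
  intro φ hφ
  refine Submodule.span_induction
    (p := fun x _ => pureXHom k n m x ∈ Ideal.span (Set.range f ∪ Set.range g))
    ?_ ?_ ?_ ?_ hφ
  · rintro x (⟨i, rfl⟩ | ⟨i, rfl⟩)
    · rw [pureXHom_apply, pureX_eq_self _ (hfonlyx i)]
      exact Ideal.subset_span (Or.inl ⟨i, rfl⟩)
    · rw [pureXHom_apply, pureX_eq_zero _ (hgonlyy i) (hg0 i)]
      exact Ideal.zero_mem _
  · show pureXHom k n m 0 ∈ _
    rw [map_zero]; exact Ideal.zero_mem _
  · intro x y _ _ hx hy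
    rw [map_add]; exact Ideal.add_mem _ hx hy
  · intro c x _ hx
    rw [smul_eq_mul, map_mul]
    exact Ideal.mul_mem_left _ _ hx

theorem aux_PiJy :
    ∀ φ ∈ (Ideal.span (Set.range fun j : Fin m => MvPowerSeries.X (Sum.inr j)) :
        Ideal (MvPowerSeries (Fin n ⊕ Fin m) k)),
      pureXHom k n m φ = 0 := by
  intro φ hφ
  refine Submodule.span_induction (p := fun x _ => pureXHom k n m x = 0) ?_ ?_ ?_ ?_ hφ
  · rintro x ⟨j, rfl⟩
    exact pureX_X_inr j
  · show pureXHom k n m 0 = 0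
    exact map_zero _
  · intro x y _ _ hx hy
    rw [map_add, hx, hy, add_zero]
  · intro c x _ hx
    rw [smul_eq_mul, map_mul, hx, mul_zero]

end P4

section Final

open MvPowerSeries

set_option maxHeartbeats 4000000
set_option synthInstance.maxHeartbeats 400000

/-- Let `k` be a field, `n, m ≥ 1`, and let `f₁,…,f_a` (resp. `g₁,…,g_b`) be power series
in the variables `x₁,…,x_n` (resp. `y₁,…,y_m`) lying in the square of the ideal generated
by those variables; all are regarded as elements of `A = k[[x₁,…,x_n,y₁,…,y_m]]`
(a power series "involves only the x-variables" precisely when every monomial containing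
some y-variable has zero coefficient).  Then, for
`R = k[[x₁,…,x_n,y₁,…,y_m]]/(f₁,…,f_a,g₁,…,g_b)`, the category `mod R` has a nontrivial
extension-closed subcategory. -/
theorem stmt_6 (k : Type u) [Field k] (n m : ℕ) (hn : 1 ≤ n) (hm : 1 ≤ m)
    (a b : ℕ) (f : Fin a → MvPowerSeries (Fin n ⊕ Fin m) k)
    (g : Fin b → MvPowerSeries (Fin n ⊕ Fin m) k)
    (hfx : ∀ i, f i ∈
      (Ideal.span (Set.range fun j : Fin n => MvPowerSeries.X (Sum.inl j)) :
        Ideal (MvPowerSeries (Fin n ⊕ Fin m) k)) ^ 2)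
    (hfonlyx : ∀ i (d : Fin n ⊕ Fin m →₀ ℕ),
      (∃ j : Fin m, d (Sum.inr j) ≠ 0) → MvPowerSeries.coeff d (f i) = 0)
    (hgy : ∀ i, g i ∈
      (Ideal.span (Set.range fun j : Fin m => MvPowerSeries.X (Sum.inr j)) :
        Ideal (MvPowerSeries (Fin n ⊕ Fin m) k)) ^ 2)
    (hgonlyy : ∀ i (d : Fin n ⊕ Fin m →₀ ℕ),
      (∃ j : Fin n, d (Sum.inl j) ≠ 0) → MvPowerSeries.coeff d (g i) = 0) :
    HasNontrivialExtClosedSubcat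
      (MvPowerSeries (Fin n ⊕ Fin m) k ⧸ Ideal.span (Set.range f ∪ Set.range g)) := by
  classical
  set F : Ideal (MvPowerSeries (Fin n ⊕ Fin m) k) := Ideal.span (Set.range f ∪ Set.range g)
    with hFdef
  have hFle := aux_F_le f g hfx hgy
  have hcv : ∀ φ ∈ F, ∀ v, MvPowerSeries.coeff (Finsupp.single v 1) φ = 0 :=
    fun φ hφ => aux_coeffv_of_mem_mul (hFle hφ)
  have hc0 : ∀ φ ∈ F, MvPowerSeries.coeff 0 φ = 0 :=
    fun φ hφ => aux_coeff0_of_mem_mul (hFle hφ)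
  have hFne : F ≠ ⊤ := by
    intro htop
    have h1 : (1 : MvPowerSeries (Fin n ⊕ Fin m) k) ∈ F := htop ▸ Submodule.mem_top
    have h2 := hc0 1 h1
    rw [MvPowerSeries.coeff_zero_eq_constantCoeff, map_one] at h2
    exact one_ne_zero h2
  haveI hnt : Nontrivial (MvPowerSeries (Fin n ⊕ Fin m) k ⧸ F) := Ideal.Quotient.nontrivial_iff.mpr hFne
  haveI hloc : IsLocalRing (MvPowerSeries (Fin n ⊕ Fin m) k ⧸ F) :=
    IsLocalRing.of_surjective' (Ideal.Quotient.mk F) Ideal.Quotient.mk_surjective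
  set Q := Ideal.Quotient.mk F with hQdef
  set JyA : Ideal (MvPowerSeries (Fin n ⊕ Fin m) k) :=
    Ideal.span (Set.range fun j : Fin m => MvPowerSeries.X (Sum.inr j)) with hJyAdef
  set JyR : Ideal (MvPowerSeries (Fin n ⊕ Fin m) k ⧸ F) := JyA.map Q with hJyRdef
  set i0 : Fin n := ⟨0, hn⟩ with hi0def
  set j0 : Fin m := ⟨0, hm⟩ with hj0def
  have hg0 : ∀ i, MvPowerSeries.coeff 0 (g i) = 0 := fun i =>
    hc0 (g i) (Ideal.subset_span (Or.inr ⟨i, rfl⟩))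
  have hPiF := aux_PiF f g hfonlyx hgonlyy hg0
  have hPiJy := aux_PiJy (k := k) (n := n) (m := m)
  set ρ : (MvPowerSeries (Fin n ⊕ Fin m) k ⧸ F) →+* (MvPowerSeries (Fin n ⊕ Fin m) k ⧸ F) :=
    Ideal.Quotient.lift F (Q.comp (pureXHom k n m))
      (fun aa haa => by
        rw [RingHom.comp_apply]
        exact Ideal.Quotient.eq_zero_iff_mem.mpr (hPiF aa haa)) with hρdef
  have hρQ : ∀ aa, ρ (Q aa) = Q (pureXHom k n m aa) := fun aa =>
    Ideal.Quotient.lift_mk F _ _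
  have hρJy : ∀ r ∈ JyR, ρ r = 0 := by
    intro r hr
    obtain ⟨w, hw, rfl⟩ := (Ideal.mem_map_iff_of_surjective Q
      Ideal.Quotient.mk_surjective).mp hr
    rw [hρQ, hPiJy w hw, map_zero]
  set ρbar : ((MvPowerSeries (Fin n ⊕ Fin m) k ⧸ F) ⧸ JyR) →+*
      (MvPowerSeries (Fin n ⊕ Fin m) k ⧸ F) :=
    Ideal.Quotient.lift JyR ρ hρJy with hρbardef
  set Qbar := Ideal.Quotient.mk JyR with hQbardef
  have hρbarQ : ∀ r, ρbar (Qbar r) = ρ r := fun r => Ideal.Quotient.lift_mk JyR _ _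
  have hsec : ∀ z, Qbar (ρbar z) = z := by
    intro z
    obtain ⟨r, rfl⟩ := Ideal.Quotient.mk_surjective (I := JyR) z
    obtain ⟨aa, rfl⟩ := Ideal.Quotient.mk_surjective (I := F) r
    rw [hρbarQ, hρQ]
    refine (Ideal.Quotient.mk_eq_mk_iff_sub_mem _ _).mpr ?_
    rw [← map_sub]
    refine Ideal.mem_map_of_mem Q ?_
    have h2 := sub_killV_mem Finset.univ aa
    rw [← pureX_eq_killV_univ] at h2
    have h3 : pureXHom k n m aa - aa = -(aa - pureX k n m aa) := by
      rw [pureXHom_apply]; ring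
    rw [h3]
    exact neg_mem h2
  have hsmul : ∀ (J : Ideal (MvPowerSeries (Fin n ⊕ Fin m) k ⧸ F))
      (r y : MvPowerSeries (Fin n ⊕ Fin m) k ⧸ F),
      r • (Ideal.Quotient.mk J y) = Ideal.Quotient.mk J (r * y) := fun J r y => rfl
  set V : Ideal ((MvPowerSeries (Fin n ⊕ Fin m) k ⧸ F) ⧸ JyR) :=
    Ideal.span (Set.range fun i : Fin n => Qbar (Q (MvPowerSeries.X (Sum.inl i)))) with hVdef
  have hJymem := aux_coeff_Jy (k := k) (n := n) (m := m)
  have hxbar_ne : ∀ i : Fin n, Qbar (Q (MvPowerSeries.X (Sum.inl i))) ≠ 0 := by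
    intro i h0
    have h1 : Q (MvPowerSeries.X (Sum.inl i)) ∈ JyR := Ideal.Quotient.eq_zero_iff_mem.mp h0
    obtain ⟨w, hw, hww⟩ := (Ideal.mem_map_iff_of_surjective Q
      Ideal.Quotient.mk_surjective).mp h1
    have h2 : MvPowerSeries.X (Sum.inl i) - w ∈ F := by
      rw [← Ideal.Quotient.mk_eq_mk_iff_sub_mem]
      exact hww.symm
    have h3 := hcv _ h2 (Sum.inl i)
    rw [map_sub, (hJymem w hw).2 i, sub_zero, MvPowerSeries.coeff_X, if_pos rfl] at h3
    exact one_ne_zero h3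
  have hy1R : Q (MvPowerSeries.X (Sum.inr j0)) ≠ 0 := by
    intro h0
    have h2 := hcv _ (Ideal.Quotient.eq_zero_iff_mem.mp h0) (Sum.inr j0)
    rw [MvPowerSeries.coeff_X, if_pos rfl] at h2
    exact one_ne_zero h2
  have hx1R : Q (MvPowerSeries.X (Sum.inl i0)) ≠ 0 := by
    intro h0
    have h2 := hcv _ (Ideal.Quotient.eq_zero_iff_mem.mp h0) (Sum.inl i0)
    rw [MvPowerSeries.coeff_X, if_pos rfl] at h2
    exact one_ne_zero h2
  have hy1bar : Qbar (Q (MvPowerSeries.X (Sum.inr j0))) = 0 :=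
    Ideal.Quotient.eq_zero_iff_mem.mpr
      (Ideal.mem_map_of_mem Q (Ideal.subset_span ⟨j0, rfl⟩))
  have hJyRne : JyR ≠ ⊤ := by
    intro htop
    have h1 : (1 : MvPowerSeries (Fin n ⊕ Fin m) k ⧸ F) ∈ JyR := htop ▸ Submodule.mem_top
    obtain ⟨w, hw, hww⟩ := (Ideal.mem_map_iff_of_surjective Q
      Ideal.Quotient.mk_surjective).mp h1
    have h2 : (1 : MvPowerSeries (Fin n ⊕ Fin m) k) - w ∈ F := by
      rw [← Ideal.Quotient.mk_eq_mk_iff_sub_mem]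
      exact (hww.trans (map_one Q).symm).symm
    have h3 := hc0 _ h2
    simp only [map_sub, MvPowerSeries.coeff_zero_eq_constantCoeff, map_one,
      (hJymem w hw).1, sub_zero] at h3
    exact one_ne_zero h3
  haveI hntbar : Nontrivial ((MvPowerSeries (Fin n ⊕ Fin m) k ⧸ F) ⧸ JyR) :=
    Ideal.Quotient.nontrivial_iff.mpr hJyRne
  have hfinQuot : ∀ J : Ideal (MvPowerSeries (Fin n ⊕ Fin m) k ⧸ F),
      Module.Finite (MvPowerSeries (Fin n ⊕ Fin m) k ⧸ F)
        ((MvPowerSeries (Fin n ⊕ Fin m) k ⧸ F) ⧸ J) := fun J =>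
    Module.Finite.of_surjective J.mkQ (Submodule.Quotient.mk_surjective J)
  have hmemMax : ∀ aa : MvPowerSeries (Fin n ⊕ Fin m) k,
      MvPowerSeries.constantCoeff (σ := Fin n ⊕ Fin m) (R := k) aa = 0 →
      Q aa ∈ IsLocalRing.maximalIdeal (MvPowerSeries (Fin n ⊕ Fin m) k ⧸ F) := by
    intro aa ha
    rw [IsLocalRing.mem_maximalIdeal, mem_nonunits_iff]
    intro hu
    obtain ⟨c, hc⟩ := hu.exists_right_inv
    obtain ⟨bb, rfl⟩ := Ideal.Quotient.mk_surjective (I := F) c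
    have h2 : aa * bb - 1 ∈ F := by
      rw [← Ideal.Quotient.eq_zero_iff_mem, map_sub, map_one, map_mul]
      rw [hc, sub_self]
    have h3 := hc0 _ h2
    simp only [map_sub, MvPowerSeries.coeff_zero_eq_constantCoeff, map_one, map_mul, ha,
      zero_mul, zero_sub, neg_eq_zero] at h3
    exact one_ne_zero h3
  by_cases hsoc : ∃ z : (MvPowerSeries (Fin n ⊕ Fin m) k ⧸ F) ⧸ JyR,
      z ≠ 0 ∧ ∀ w ∈ V, z * w = 0
  · -- Case 1: the quotient ring has a nonzero "socle" element
    obtain ⟨z₀, hz₀ne, hz₀⟩ := hsoc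
    set SocS : Set ((MvPowerSeries (Fin n ⊕ Fin m) k ⧸ F) ⧸ JyR) :=
      {z | ∀ w ∈ V, z * w = 0} with hSocSdef
    set Soc2S : Set ((MvPowerSeries (Fin n ⊕ Fin m) k ⧸ F) ⧸ JyR) :=
      {u | ∀ z ∈ SocS, u * z = 0} with hSoc2Sdef
    set I' : Ideal (MvPowerSeries (Fin n ⊕ Fin m) k ⧸ F) := Ideal.span (ρbar '' SocS)
      with hI'def
    set I : Ideal (MvPowerSeries (Fin n ⊕ Fin m) k ⧸ F) := Ideal.span (ρbar '' Soc2S)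
      with hIdef
    have hz₀S : z₀ ∈ SocS := hz₀
    have hVsub : ∀ w ∈ V, w ∈ Soc2S := by
      intro w hw z hz
      refine (mul_comm w z).trans ?_
      exact hz w hw
    have hII' : ∀ i ∈ I, ∀ i' ∈ I', i * i' = 0 := by
      intro i hi
      refine Submodule.span_induction (p := fun x _ => ∀ i' ∈ I', x * i' = 0) ?_ ?_ ?_ ?_ hi
      · rintro x ⟨uu, huu, rfl⟩ i' hi'
        refine Submodule.span_induction (p := fun y _ => ρbar uu * y = 0) ?_ ?_ ?_ ?_ hi'
        · rintro y ⟨vv, hvv, rfl⟩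
          rw [← map_mul, huu vv hvv, map_zero]
        · show ρbar uu * 0 = 0
          exact mul_zero _
        · intro y z _ _ hy hz
          show ρbar uu * (y + z) = 0
          rw [mul_add, hy, hz, add_zero]
        · intro c y _ hy
          show ρbar uu * (c • y) = 0
          rw [smul_eq_mul, mul_left_comm, hy, mul_zero]
      · intro i' hi'
        show (0 : MvPowerSeries (Fin n ⊕ Fin m) k ⧸ F) * i' = 0
        exact zero_mul _
      · intro x y _ _ hx hy i' hi'
        show (x + y) * i' = 0
        rw [add_mul, hx i' hi', hy i' hi', add_zero]
      · intro c x _ hx i' hi'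
        show (c • x) * i' = 0
        rw [smul_eq_mul, mul_assoc, hx i' hi', mul_zero]
    have hfinRbar := hfinQuot JyR
    have hPRbar : annPred I I' ((MvPowerSeries (Fin n ⊕ Fin m) k ⧸ F) ⧸ JyR) := by
      refine ⟨hfinRbar, fun z hz => ?_⟩
      obtain ⟨y, rfl⟩ := Ideal.Quotient.mk_surjective (I := JyR) z
      have hz2 : ∀ uu ∈ Soc2S, uu * (Qbar y) = 0 := by
        intro uu huu
        have h1 := hz (ρbar uu) (Ideal.subset_span ⟨uu, huu, rfl⟩)
        rw [hsmul] at h1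
        rw [← hsec uu, ← map_mul]
        exact h1
      have hzS : Qbar y ∈ SocS := by
        intro w hw
        refine (mul_comm (Qbar y) w).trans ?_
        exact hz2 w (hVsub w hw)
      have hz1 : (Qbar y) = (ρbar (Qbar y)) • (1 : (MvPowerSeries (Fin n ⊕ Fin m) k ⧸ F) ⧸ JyR) := by
        rw [show (1 : (MvPowerSeries (Fin n ⊕ Fin m) k ⧸ F) ⧸ JyR) = Ideal.Quotient.mk JyR 1 from rfl,
          hsmul, mul_one]
        exact (hsec _).symm
      rw [hz1]
      exact Submodule.smul_mem_smul (Ideal.subset_span ⟨Qbar y, hzS, rfl⟩) Submodule.mem_top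
    have hI'le : I' ≤ IsLocalRing.maximalIdeal (MvPowerSeries (Fin n ⊕ Fin m) k ⧸ F) := by
      rw [hI'def, Ideal.span_le]
      rintro x ⟨vv, hvv, rfl⟩
      rw [SetLike.mem_coe, IsLocalRing.mem_maximalIdeal, mem_nonunits_iff]
      intro hu
      have hvu : IsUnit vv := by
        rw [← hsec vv]
        exact hu.map Qbar
      have h1 := hvv _ (Ideal.subset_span ⟨i0, rfl⟩)
      exact hxbar_ne i0 ((hvu.mul_right_eq_zero).mp h1)
    have hIle : I ≤ IsLocalRing.maximalIdeal (MvPowerSeries (Fin n ⊕ Fin m) k ⧸ F) := by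
      rw [hIdef, Ideal.span_le]
      rintro x ⟨uu, huu, rfl⟩
      rw [SetLike.mem_coe, IsLocalRing.mem_maximalIdeal, mem_nonunits_iff]
      intro hu
      have huu' : IsUnit uu := by
        rw [← hsec uu]
        exact hu.map Qbar
      exact hz₀ne ((huu'.mul_right_eq_zero).mp (huu z₀ hz₀S))
    refine ⟨annPred I I', annPred_extClosed I I' hII', ?_, ?_, ?_⟩
    · intro hzero
      have := (hzero _ hfinRbar).mp hPRbar
      exact not_subsingleton _ this
    · intro hadd
      have hfree := (hadd _ hfinRbar).mp hPRbar
      refine aux_not_free (r := Q (MvPowerSeries.X (Sum.inr j0))) hy1R ?_ hfree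
      intro z
      obtain ⟨y, rfl⟩ := Ideal.Quotient.mk_surjective (I := JyR) z
      rw [hsmul]
      show Qbar (Q (MvPowerSeries.X (Sum.inr j0)) * y) = 0
      rw [map_mul, hy1bar, zero_mul]
    · intro hmod
      have hPK := hmod ((MvPowerSeries (Fin n ⊕ Fin m) k ⧸ F) ⧸
        IsLocalRing.maximalIdeal (MvPowerSeries (Fin n ⊕ Fin m) k ⧸ F)) (hfinQuot _)
      obtain ⟨-, hmem⟩ := hPK
      have hkill : ∀ i ∈ I, i • (1 : (MvPowerSeries (Fin n ⊕ Fin m) k ⧸ F) ⧸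
          IsLocalRing.maximalIdeal (MvPowerSeries (Fin n ⊕ Fin m) k ⧸ F)) = 0 := by
        intro i hi
        rw [show (1 : (MvPowerSeries (Fin n ⊕ Fin m) k ⧸ F) ⧸
          IsLocalRing.maximalIdeal (MvPowerSeries (Fin n ⊕ Fin m) k ⧸ F)) =
          Ideal.Quotient.mk _ 1 from rfl, hsmul, mul_one]
        exact Ideal.Quotient.eq_zero_iff_mem.mpr (hIle hi)
      have h1 := hmem 1 hkill
      have hzero : ∀ x ∈ I' • (⊤ : Submodule (MvPowerSeries (Fin n ⊕ Fin m) k ⧸ F)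
          ((MvPowerSeries (Fin n ⊕ Fin m) k ⧸ F) ⧸
            IsLocalRing.maximalIdeal (MvPowerSeries (Fin n ⊕ Fin m) k ⧸ F))), x = 0 := by
        intro x hx
        refine Submodule.smul_induction_on hx ?_ ?_
        · intro r hr u _
          obtain ⟨y, rfl⟩ := Ideal.Quotient.mk_surjective u
          rw [hsmul]
          exact Ideal.Quotient.eq_zero_iff_mem.mpr (Ideal.mul_mem_right y _ (hI'le hr))
        · intro x y hx hy
          rw [hx, hy, add_zero]
      have h2 := hzero 1 h1
      haveI : Nontrivial ((MvPowerSeries (Fin n ⊕ Fin m) k ⧸ F) ⧸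
          IsLocalRing.maximalIdeal (MvPowerSeries (Fin n ⊕ Fin m) k ⧸ F)) :=
        Ideal.Quotient.nontrivial_iff.mpr (Ideal.IsMaximal.ne_top inferInstance)
      exact one_ne_zero h2
  · -- Case 2: no nonzero socle element; use the finite-length-type subcategory
    have hPK : powPred (MvPowerSeries (Fin n ⊕ Fin m) k ⧸ F)
        ((MvPowerSeries (Fin n ⊕ Fin m) k ⧸ F) ⧸
          IsLocalRing.maximalIdeal (MvPowerSeries (Fin n ⊕ Fin m) k ⧸ F)) := by
      refine ⟨hfinQuot _, 1, fun c hc x => ?_⟩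
      rw [pow_one] at hc
      obtain ⟨y, rfl⟩ := Ideal.Quotient.mk_surjective x
      rw [hsmul]
      exact Ideal.Quotient.eq_zero_iff_mem.mpr (Ideal.mul_mem_right y _ hc)
    haveI hKnt : Nontrivial ((MvPowerSeries (Fin n ⊕ Fin m) k ⧸ F) ⧸
        IsLocalRing.maximalIdeal (MvPowerSeries (Fin n ⊕ Fin m) k ⧸ F)) :=
      Ideal.Quotient.nontrivial_iff.mpr (Ideal.IsMaximal.ne_top inferInstance)
    have hnotPR : ¬ powPred (MvPowerSeries (Fin n ⊕ Fin m) k ⧸ F)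
        (MvPowerSeries (Fin n ⊕ Fin m) k ⧸ F) := by
      rintro ⟨-, N, hN⟩
      have hmN : (IsLocalRing.maximalIdeal (MvPowerSeries (Fin n ⊕ Fin m) k ⧸ F)) ^ N = ⊥ := by
        rw [eq_bot_iff]
        intro c hc
        have h2 := hN c hc 1
        rw [smul_eq_mul, mul_one] at h2
        simpa using h2
      have hVle : V ≤ Ideal.map Qbar
          (IsLocalRing.maximalIdeal (MvPowerSeries (Fin n ⊕ Fin m) k ⧸ F)) := by
        rw [hVdef, Ideal.span_le]
        rintro x ⟨i, rfl⟩
        exact Ideal.mem_map_of_mem Qbar (hmemMax _ (MvPowerSeries.constantCoeff_X _))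
      have hVN : V ^ N = ⊥ := by
        have h1 : V ^ N ≤ (Ideal.map Qbar
            (IsLocalRing.maximalIdeal (MvPowerSeries (Fin n ⊕ Fin m) k ⧸ F))) ^ N :=
          Ideal.pow_right_mono hVle N
        have h2 : Ideal.map Qbar
            ((IsLocalRing.maximalIdeal (MvPowerSeries (Fin n ⊕ Fin m) k ⧸ F)) ^ N) = ⊥ := by
          rw [hmN, Ideal.map_bot]
        exact le_bot_iff.mp (h1.trans ((@Ideal.map_pow _ _ _ _ (Ideal.Quotient.commSemiring JyR) _
          RingHom.instRingHomClass Qbar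
          (IsLocalRing.maximalIdeal (MvPowerSeries (Fin n ⊕ Fin m) k ⧸ F)) N).symm.trans h2).le)
      have hexs : ∃ s, V ^ s = ⊥ := ⟨N, hVN⟩
      have hsbot : V ^ (Nat.find hexs) = ⊥ := Nat.find_spec hexs
      have hs1 : 1 ≤ Nat.find hexs := by
        rcases Nat.eq_zero_or_pos (Nat.find hexs) with h | h
        · exfalso
          rw [h] at hsbot
          have h1 : (1 : (MvPowerSeries (Fin n ⊕ Fin m) k ⧸ F) ⧸ JyR) ∈
              (⊥ : Ideal ((MvPowerSeries (Fin n ⊕ Fin m) k ⧸ F) ⧸ JyR)) :=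
            hsbot ▸ (show (1 : (MvPowerSeries (Fin n ⊕ Fin m) k ⧸ F) ⧸ JyR) ∈ V ^ 0 from
              Submodule.one_le.mp le_rfl)
          exact one_ne_zero ((Submodule.mem_bot _).mp h1)
        · exact h
      have hsprev : V ^ (Nat.find hexs - 1) ≠ ⊥ := Nat.find_min hexs (by omega)
      obtain ⟨z, hzmem, hzne⟩ := (Submodule.ne_bot_iff _).mp hsprev
      refine hsoc ⟨z, hzne, ?_⟩
      intro w hw
      have h2 : z * w ∈ V ^ (Nat.find hexs - 1) * V := Ideal.mul_mem_mul hzmem hw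
      replace h2 : z * w ∈ V ^ (Nat.find hexs - 1 + 1) := h2
      rw [show Nat.find hexs - 1 + 1 = Nat.find hexs by omega, hsbot] at h2
      exact (Submodule.mem_bot _).mp h2
    refine ⟨powPred (MvPowerSeries (Fin n ⊕ Fin m) k ⧸ F), powPred_extClosed, ?_, ?_, ?_⟩
    · intro hzero
      have := (hzero _ (hfinQuot _)).mp hPK
      exact not_subsingleton _ this
    · intro hadd
      have hfree := (hadd _ (hfinQuot _)).mp hPK
      refine aux_not_free (r := Q (MvPowerSeries.X (Sum.inl i0))) hx1R ?_ hfree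
      intro x
      obtain ⟨y, rfl⟩ := Ideal.Quotient.mk_surjective x
      rw [hsmul]
      exact Ideal.Quotient.eq_zero_iff_mem.mpr
        (Ideal.mul_mem_right y _ (hmemMax _ (MvPowerSeries.constantCoeff_X _)))
    · intro hmod
      exact hnotPR (hmod _ inferInstance)

end Final
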